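/- For a strict partition μ contained in the staircase with a removable box allowed, there is a bijection showing that the coefficient extraction ⟨λ, A₀(x)A₁(x)⋯A_n(x)·μ⟩ equals Σ_{V} β^{-|λ/μ|}(βx)^{|V|}, where the sum runs over vertical strips V with V ∪ SD_μ = SD_λ and V ∩ SD_μ ⊆ Rem(μ). -/

import Mathlib

noncomputable section
open Finset

/-- A strict partition: a strictly decreasing list of positive integers. -/
def StrictPartition : Type := {l : List ℕ // l.Chain' (· > ·) ∧ ∀ x ∈ l, 0 < x}

/-- The shifted diagram of a list `l = (l₁, l₂, …)`:
`SD = {(i, i+j-1) : 1 ≤ i ≤ length l, 1 ≤ j ≤ lᵢ}` (rows and columns indexed from 1). -/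
def shiftedDiagram (l : List ℕ) : Finset (ℕ × ℕ) :=
  (Finset.Icc 1 l.length ×ˢ Finset.Icc 1 (l.length + l.sum)).filter
    fun p => p.1 ≤ p.2 ∧ p.2 < p.1 + l.getD (p.1 - 1) 0

/-- The shifted diagram of a strict partition. -/
def SD (μ : StrictPartition) : Finset (ℕ × ℕ) := shiftedDiagram μ.1

/-- `c` is a removable box of the strict partition `μ`: `c ∈ SD μ` and deleting `c`
yields the shifted diagram of a strict partition. -/
def IsRemovable (μ : StrictPartition) (c : ℕ × ℕ) : Prop :=
  c ∈ SD μ ∧ ∃ ν : StrictPartition, SD ν = (SD μ).erase c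

/-- `c` is an addable box of the strict partition `μ`: `c ∉ SD μ` and adjoining `c`
yields the shifted diagram of a strict partition. -/
def IsAddable (μ : StrictPartition) (c : ℕ × ℕ) : Prop :=
  c ∉ SD μ ∧ ∃ ν : StrictPartition, SD ν = insert c (SD μ)

open scoped Classical in
/-- The diagonal box-adding operator `a_n` on basis elements: `a_n μ = β·μ` if `μ` has a
removable box on diagonal `n`; `a_n μ = ν` if `SD ν = SD μ ⊔ {(i,j)}` with `j - i = n`;
and `a_n μ = 0` otherwise. -/
def aRaw {R : Type*} [CommRing R] (β : R) (n : ℕ) (μ : StrictPartition) :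
    StrictPartition →₀ R :=
  if ∃ c : ℕ × ℕ, IsRemovable μ c ∧ c.2 = c.1 + n then Finsupp.single μ β
  else if h : ∃ ν : StrictPartition, ∃ c : ℕ × ℕ, c.2 = c.1 + n ∧ c ∉ SD μ ∧
      SD ν = insert c (SD μ) then
    Finsupp.single h.choose 1
  else 0

/-- The operator `a_n`, extended linearly to the free module on strict partitions. -/
def aOp {R : Type*} [CommRing R] (β : R) (n : ℕ) :
    (StrictPartition →₀ R) →ₗ[R] (StrictPartition →₀ R) :=
  Finsupp.lift (StrictPartition →₀ R) R StrictPartition (aRaw β n)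

/-- The operator `A_i(x) := 1 + x·a_i`. -/
def AOp {R : Type*} [CommRing R] (β : R) (i : ℕ) (x : R) :
    (StrictPartition →₀ R) →ₗ[R] (StrictPartition →₀ R) :=
  LinearMap.id + x • aOp β i

/-- The composite operator `A₀(x)·A₁(x)·⋯·A_n(x)` (so `A_n(x)` is applied first). -/
def Achain {R : Type*} [CommRing R] (β x : R) : ℕ → ((StrictPartition →₀ R) →ₗ[R] (StrictPartition →₀ R))
  | 0 => AOp β 0 x
  | n + 1 => (Achain β x n).comp (AOp β (n + 1) x)

/-!
Write `A₀(x) ⋯ A_n(x) = C_{n+1}` with `C_{m+1} = C_m ∘ A_m(x)` and show by induction on `m` that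
`⟨κ, C_m μ⟩` is the weighted sum over the strips whose boxes lie on diagonals `< m`. In
`C_{m+1} μ = C_m μ + x • C_m (a_m μ)` the strips avoiding diagonal `m` account for `C_m μ`. A strip
reaching diagonal `m` does so in a single box, which is either the removable box of `μ` on that
diagonal (and then `a_m μ = β μ`) or its addable box (and then `a_m μ = μ + □`); deleting this box
matches these strips with the strips of `μ`, resp. `μ + □`, below diagonal `m`, and these account
for `x • C_m (a_m μ)`.
-/

namespace StrictPartition

variable {μ ν κ : StrictPartition} {c : ℕ × ℕ} {j k d t m : ℕ} {V W : Finset (ℕ × ℕ)}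

/-- `μ.row k` is the length of the `(k+1)`-st row of `μ`, and `0` beyond the last row. -/
def row (μ : StrictPartition) (k : ℕ) : ℕ := μ.1.getD k 0

lemma row_pos_iff : 0 < μ.row k ↔ k < μ.1.length := by
  refine ⟨fun h => ?_, fun h => ?_⟩
  · by_contra hk
    rw [row, List.getD_eq_default _ _ (not_lt.1 hk)] at h
    exact h.false
  · rw [row, List.getD_eq_getElem _ _ h]
    exact μ.2.2 _ (List.getElem_mem h)

lemma row_zero (μ : StrictPartition) : μ.row 0 = μ.1.headD 0 := by
  rcases μ with ⟨_ | ⟨a, l⟩, h⟩ <;> rfl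

lemma row_le_sum (μ : StrictPartition) (k : ℕ) : μ.row k ≤ μ.1.sum := by
  rcases lt_or_ge k μ.1.length with hk | hk
  · rw [row, List.getD_eq_getElem _ _ hk]
    exact List.le_sum_of_mem (List.getElem_mem hk)
  · rw [row, List.getD_eq_default _ _ hk]
    exact Nat.zero_le _

lemma sum_eq_sum_row (μ : StrictPartition) : μ.1.sum = ∑ k ∈ range μ.1.length, μ.row k := by
  rw [← Fin.sum_univ_getElem, ← Fin.sum_univ_eq_sum_range]
  exact Finset.sum_congr rfl fun i _ => (List.getD_eq_getElem _ _ i.2).symm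

lemma ext_row (h : μ.row = ν.row) : μ = ν := by
  have hlen : μ.1.length = ν.1.length :=
    eq_of_forall_lt_iff fun k => by rw [← row_pos_iff, ← row_pos_iff, h]
  refine Subtype.ext (List.ext_getElem hlen fun k hμ hν => ?_)
  have hk := congrFun h k
  rwa [row, row, List.getD_eq_getElem _ _ hμ, List.getD_eq_getElem _ _ hν] at hk

def IsStrictRows (g : ℕ → ℕ) : Prop := ∀ k, g (k + 1) = 0 ∨ g (k + 1) < g k

lemma isStrictRows_row (μ : StrictPartition) : IsStrictRows μ.row := by
  intro k
  rcases lt_or_ge (k + 1) μ.1.length with hk | hk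
  · right
    have := List.isChain_iff_getElem.1 μ.2.1 k hk
    rwa [row, row, List.getD_eq_getElem _ _ hk, List.getD_eq_getElem _ _ (by omega)]
  · left
    exact List.getD_eq_default _ _ hk

lemma row_antitone (μ : StrictPartition) : Antitone μ.row :=
  antitone_nat_of_succ_le fun k => by rcases μ.isStrictRows_row k with h | h <;> omega

lemma row_lt_row (hjk : j < k) (hk : μ.row k ≠ 0) : μ.row k < μ.row j := by
  obtain ⟨i, rfl⟩ : ∃ i, k = i + 1 := ⟨k - 1, by omega⟩
  have := μ.row_antitone (show j ≤ i by omega)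
  rcases μ.isStrictRows_row i with h | h <;> omega

lemma eq_of_row_eq_row (h : μ.row j = μ.row k) (hk : μ.row k ≠ 0) : j = k := by
  rcases lt_trichotomy j k with hjk | rfl | hkj
  · exact absurd h (row_lt_row hjk hk).ne'
  · rfl
  · exact absurd h (row_lt_row hkj (h ▸ hk)).ne

lemma mem_SD : c ∈ SD μ ↔ 0 < c.1 ∧ c.1 ≤ c.2 ∧ c.2 < c.1 + μ.row (c.1 - 1) := by
  have hrow : ∀ j, μ.1.getD j 0 = μ.row j := fun _ => rfl
  simp only [SD, shiftedDiagram, mem_filter, mem_product, mem_Icc, hrow]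
  refine ⟨fun ⟨⟨⟨h1, _⟩, _⟩, h3, h4⟩ => ⟨h1, h3, h4⟩, fun ⟨h1, h3, h4⟩ => ?_⟩
  have hpos : 0 < μ.row (c.1 - 1) := by omega
  have hlen := row_pos_iff.1 hpos
  have hsum := μ.row_le_sum (c.1 - 1)
  exact ⟨⟨⟨h1, by omega⟩, by omega, by omega⟩, h3, h4⟩

@[simp]
lemma mk_mem_SD : (k + 1, k + 1 + t) ∈ SD μ ↔ t < μ.row k := by
  rw [mem_SD]
  simp only [Nat.add_sub_cancel]
  omega

lemma exists_eq_mk_of_mem_SD (h : c ∈ SD μ) : ∃ k t, c = (k + 1, k + 1 + t) := by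
  rw [mem_SD] at h
  exact ⟨c.1 - 1, c.2 - c.1, by ext <;> simp only <;> omega⟩

lemma SD_injective : Function.Injective SD :=
  fun μ ν h => ext_row <| funext fun k => eq_of_forall_lt_iff fun t => by
    rw [← mk_mem_SD, ← mk_mem_SD, h]

lemma card_filter_SD_row (μ : StrictPartition) (k : ℕ) :
    ((SD μ).filter fun c => c.1 - 1 = k).card = μ.row k := by
  have : (SD μ).filter (fun c => c.1 - 1 = k) =
      (range (μ.row k)).image fun t => (k + 1, k + 1 + t) := by
    ext ⟨a, b⟩
    simp only [mem_filter, mem_SD, mem_image, mem_range, Prod.mk.injEq]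
    constructor
    · rintro ⟨⟨h1, h2, h3⟩, rfl⟩
      exact ⟨b - a, by omega, by omega, by omega⟩
    · rintro ⟨t, ht, rfl, rfl⟩
      simp only [Nat.add_sub_cancel, and_true]
      omega
  rw [this, card_image_of_injective _ fun s t h => by simpa using h, card_range]

lemma card_SD (μ : StrictPartition) : (SD μ).card = μ.1.sum := by
  rw [card_eq_sum_card_fiberwise (f := fun c => c.1 - 1) (t := range μ.1.length),
    sum_eq_sum_row]
  · exact Finset.sum_congr rfl fun k _ => card_filter_SD_row μ k
  · intro c hc
    rw [mem_coe, mem_SD] at hc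
    rw [mem_coe, mem_range, ← row_pos_iff]
    exact show 0 < μ.row (c.1 - 1) by omega

namespace IsStrictRows

variable {g : ℕ → ℕ}

lemma eq_zero_of_le (hg : IsStrictRows g) (hjk : j ≤ k) (hj : g j = 0) : g k = 0 := by
  induction k, hjk using Nat.le_induction with
  | base => exact hj
  | succ k _ ih => rcases hg k with h | h <;> omega

lemma exists_eq_zero (hg : IsStrictRows g) : ∃ N, g N = 0 := by
  have key : ∀ k, g k = 0 ∨ g k + k ≤ g 0 := by
    intro k
    induction k with
    | zero => omega
    | succ k ih => rcases hg k with h | h <;> omega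
  exact ⟨g 0, by rcases key (g 0) with h | h <;> omega⟩

end IsStrictRows

def ofRows (g : ℕ → ℕ) (hg : IsStrictRows g) : StrictPartition :=
  ⟨(List.range (Nat.find hg.exists_eq_zero)).map g,
    List.isChain_iff_getElem.2 fun i hi => by
      simp only [List.length_map, List.length_range] at hi
      simp only [List.getElem_map, List.getElem_range]
      have := Nat.find_min hg.exists_eq_zero (show i + 1 < _ by omega)
      rcases hg i with h | h <;> omega,
    fun y hy => by
      obtain ⟨i, hi, rfl⟩ := List.mem_map.1 hy
      exact Nat.pos_of_ne_zero (Nat.find_min hg.exists_eq_zero (List.mem_range.1 hi))⟩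

lemma row_ofRows (g : ℕ → ℕ) (hg : IsStrictRows g) : (ofRows g hg).row = g := by
  funext k
  simp only [row, ofRows]
  rcases lt_or_ge k (Nat.find hg.exists_eq_zero) with h | h
  · rw [List.getD_eq_getElem _ _ (by simpa using h)]
    simp
  · rw [List.getD_eq_default _ _ (by simpa using h)]
    exact (hg.eq_zero_of_le h (Nat.find_spec hg.exists_eq_zero)).symm

/-- Row-length form of `IsRemovable μ (k + 1, k + 1 + d)`, see `isRemovable_mk_iff`. -/
def RemovableAt (μ : StrictPartition) (k d : ℕ) : Prop :=
  μ.row k = d + 1 ∧ (μ.row (k + 1) = 0 ∨ μ.row (k + 1) < d)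

/-- Row-length form of `IsAddable μ (k + 1, k + 1 + d)`. -/
def AddableAt (μ : StrictPartition) (k d : ℕ) : Prop :=
  μ.row k = d ∧ (k = 0 ∨ d + 1 < μ.row (k - 1))

lemma row_of_SD_eq_insert (h : SD ν = insert c (SD μ))
    (hc : c ∉ SD μ) (j : ℕ) : ν.row j = μ.row j + if c.1 - 1 = j then 1 else 0 := by
  rw [← card_filter_SD_row, ← card_filter_SD_row, h, filter_insert]
  split_ifs
  · exact card_insert_of_notMem fun h' => hc (mem_filter.1 h').1
  · rfl

lemma row_of_SD_eq_erase (h : SD ν = (SD μ).erase c)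
    (hc : c ∈ SD μ) (j : ℕ) : ν.row j + (if c.1 - 1 = j then 1 else 0) = μ.row j := by
  rw [← card_filter_SD_row, ← card_filter_SD_row, h, filter_erase]
  split_ifs with hj
  · exact card_erase_add_one (mem_filter.2 ⟨hc, hj⟩)
  · rw [erase_eq_of_notMem (a := c) fun h' => hj (mem_filter.1 h').2, add_zero]

lemma addableAt_of_SD_eq_insert
    (h : SD ν = insert (k + 1, k + 1 + d) (SD μ)) (hc : (k + 1, k + 1 + d) ∉ SD μ) :
    AddableAt μ k d := by
  have hrow := row_of_SD_eq_insert h hc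
  have hk : d < ν.row k := mk_mem_SD.1 (h ▸ mem_insert_self _ _)
  rw [mk_mem_SD] at hc
  have hνk : ν.row k = μ.row k + 1 := by simpa using hrow k
  refine ⟨by omega, ?_⟩
  rcases k with _ | j
  · exact .inl rfl
  · have hνj : ν.row j = μ.row j := by simpa using hrow j
    have := ν.isStrictRows_row j
    exact .inr (by rw [Nat.add_sub_cancel]; omega)

lemma removableAt_of_SD_eq_erase
    (h : SD ν = (SD μ).erase (k + 1, k + 1 + d)) (hc : (k + 1, k + 1 + d) ∈ SD μ) :
    RemovableAt μ k d := by
  have hrow := row_of_SD_eq_erase h hc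
  have hk : ¬ d < ν.row k := by rw [← mk_mem_SD, h]; simp
  rw [mk_mem_SD] at hc
  have hνk : ν.row k + 1 = μ.row k := by simpa using hrow k
  have hνk1 : ν.row (k + 1) = μ.row (k + 1) := by simpa using hrow (k + 1)
  have := ν.isStrictRows_row k
  exact ⟨by omega, by omega⟩

lemma isStrictRows_update_of_removableAt
    (h : RemovableAt μ k d) : IsStrictRows (Function.update μ.row k d) := by
  intro j
  have hj := μ.isStrictRows_row j
  obtain ⟨hk, hk1⟩ := h
  by_cases hjk : j = k
  · subst hjk
    simpa using hk1
  by_cases hjk1 : j + 1 = k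
  · subst hjk1
    simp only [Function.update_self, Function.update_of_ne hjk]
    omega
  · simpa only [Function.update_of_ne hjk, Function.update_of_ne hjk1] using hj

lemma isStrictRows_update_of_addableAt
    (h : AddableAt μ k d) : IsStrictRows (Function.update μ.row k (d + 1)) := by
  intro j
  have hj := μ.isStrictRows_row j
  obtain ⟨hk, hk1⟩ := h
  by_cases hjk : j = k
  · subst hjk
    simp only [Function.update_self, Function.update_of_ne (show j + 1 ≠ j by omega)]
    omega
  by_cases hjk1 : j + 1 = k
  · subst hjk1
    simp only [Function.update_self, Function.update_of_ne hjk]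
    replace hk1 : d + 1 < μ.row j := by simpa using hk1
    omega
  · simpa only [Function.update_of_ne hjk, Function.update_of_ne hjk1] using hj

def addBox (h : AddableAt μ k d) : StrictPartition :=
  ofRows _ (isStrictRows_update_of_addableAt h)

lemma row_addBox (h : AddableAt μ k d) : (addBox h).row = Function.update μ.row k (d + 1) :=
  row_ofRows _ _

lemma SD_addBox (h : AddableAt μ k d) : SD (addBox h) = insert (k + 1, k + 1 + d) (SD μ) := by
  ext ⟨a, b⟩
  simp only [mem_insert, mem_SD, row_addBox, Prod.mk.injEq]
  by_cases hak : a - 1 = k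
  · subst hak
    rw [Function.update_self, ← h.1]
    omega
  · rw [Function.update_of_ne hak]
    omega

lemma sum_addBox (h : AddableAt μ k d) : (addBox h).1.sum = μ.1.sum + 1 := by
  rw [← card_SD, ← card_SD, SD_addBox, card_insert_of_notMem (by simp [h.1])]

lemma isRemovable_mk_iff : IsRemovable μ (k + 1, k + 1 + d) ↔ RemovableAt μ k d := by
  refine ⟨fun ⟨hc, _, hν⟩ => removableAt_of_SD_eq_erase hν hc, fun h => ⟨by simp [h.1], ?_⟩⟩
  refine ⟨ofRows _ (isStrictRows_update_of_removableAt h), ?_⟩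
  ext ⟨a, b⟩
  simp only [mem_erase, mem_SD, row_ofRows, ne_eq, Prod.mk.injEq]
  by_cases hak : a - 1 = k
  · subst hak
    rw [Function.update_self, h.1]
    omega
  · rw [Function.update_of_ne hak]
    omega

lemma RemovableAt.unique (hj : RemovableAt μ j d) (hk : RemovableAt μ k d) : j = k :=
  eq_of_row_eq_row (hj.1.trans hk.1.symm) (by rw [hk.1]; omega)

lemma AddableAt.unique (hj : AddableAt μ j d) (hk : AddableAt μ k d) : j = k := by
  wlog hjk : j < k generalizing j k
  · rcases (not_lt.1 hjk).lt_or_eq with h | h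
    · exact (this hk hj h).symm
    · exact h.symm
  rcases Nat.eq_zero_or_pos d with rfl | hd
  · have := μ.row_antitone (show j ≤ k - 1 by omega)
    unfold AddableAt at hj hk
    omega
  · exact eq_of_row_eq_row (hj.1.trans hk.1.symm) (by rw [hk.1]; omega)

lemma RemovableAt.not_addableAt (hj : RemovableAt μ j d) : ¬ AddableAt μ k d := by
  intro hk
  unfold RemovableAt AddableAt at *
  rcases lt_or_ge j k with hjk | hkj
  · have := μ.row_antitone (show j ≤ k - 1 by omega)
    omega
  · have := μ.row_antitone hkj
    omega

lemma exists_isRemovable_diag_iff :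
    (∃ c : ℕ × ℕ, IsRemovable μ c ∧ c.2 = c.1 + d) ↔ ∃ k, RemovableAt μ k d := by
  constructor
  · rintro ⟨c, hc, hd⟩
    obtain ⟨k, t, rfl⟩ := exists_eq_mk_of_mem_SD hc.1
    obtain rfl : t = d := by simp only at hd; omega
    exact ⟨k, isRemovable_mk_iff.1 hc⟩
  · rintro ⟨k, hk⟩
    exact ⟨_, isRemovable_mk_iff.2 hk, rfl⟩

lemma addableAt_of_SD_eq_insert_diag
    (hd : c.2 = c.1 + d) (hc : c ∉ SD μ) (hν : SD ν = insert c (SD μ)) :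
    ∃ k, c = (k + 1, k + 1 + d) ∧ AddableAt μ k d := by
  obtain ⟨k, t, rfl⟩ := exists_eq_mk_of_mem_SD (hν ▸ mem_insert_self c (SD μ))
  obtain rfl : t = d := by simp only at hd; omega
  exact ⟨k, rfl, addableAt_of_SD_eq_insert hν hc⟩

variable {R : Type*} [CommRing R]

lemma aRaw_of_removableAt (β : R) (h : RemovableAt μ k d) : aRaw β d μ = Finsupp.single μ β := by
  rw [aRaw, if_pos (exists_isRemovable_diag_iff.2 ⟨k, h⟩)]

lemma aRaw_of_addableAt (β : R) (hr : ¬ ∃ k, RemovableAt μ k d) (h : AddableAt μ k d) :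
    aRaw β d μ = Finsupp.single (addBox h) 1 := by
  have hex : ∃ ν : StrictPartition, ∃ c : ℕ × ℕ, c.2 = c.1 + d ∧ c ∉ SD μ ∧
      SD ν = insert c (SD μ) :=
    ⟨addBox h, _, rfl, by simp [h.1], SD_addBox h⟩
  rw [aRaw, if_neg (mt exists_isRemovable_diag_iff.1 hr), dif_pos hex]
  obtain ⟨c, hd, hc, hν⟩ := hex.choose_spec
  obtain ⟨k', rfl, hk'⟩ := addableAt_of_SD_eq_insert_diag hd hc hν
  obtain rfl := hk'.unique h
  rw [SD_injective (hν.trans (SD_addBox h).symm)]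

lemma aRaw_eq_zero (β : R) (hr : ¬ ∃ k, RemovableAt μ k d)
    (ha : ¬ ∃ k, AddableAt μ k d) : aRaw β d μ = 0 := by
  rw [aRaw, if_neg (mt exists_isRemovable_diag_iff.1 hr), dif_neg]
  rintro ⟨ν, c, hd, hc, hν⟩
  obtain ⟨k, -, hk⟩ := addableAt_of_SD_eq_insert_diag hd hc hν
  exact ha ⟨k, hk⟩

/-- `partialChain β x m = A₀(x) ⋯ A_{m-1}(x)`. -/
def partialChain (β x : R) : ℕ → Module.End R (StrictPartition →₀ R)
  | 0 => LinearMap.id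
  | m + 1 => partialChain β x m ∘ₗ AOp β m x

lemma Achain_eq_partialChain (β x : R) (n : ℕ) : Achain β x n = partialChain β x (n + 1) := by
  induction n with
  | zero => exact (LinearMap.id_comp _).symm
  | succ n ih => rw [Achain, ih]; rfl

lemma partialChain_succ_single (β x : R) (m : ℕ) (μ : StrictPartition) :
    partialChain β x (m + 1) (Finsupp.single μ 1) =
      partialChain β x m (Finsupp.single μ 1) + x • partialChain β x m (aRaw β m μ) := by
  simp [partialChain, AOp, aOp, Finsupp.lift_apply, Finsupp.sum_single_index]

structure IsStrip (μ κ : StrictPartition) (m : ℕ) (V : Finset (ℕ × ℕ)) : Prop where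
  eq_of_fst_eq : ∀ c ∈ V, ∀ c' ∈ V, c.1 = c'.1 → c = c'
  union_eq : V ∪ SD μ = SD κ
  isRemovable : ∀ c ∈ V ∩ SD μ, IsRemovable μ c
  diag_lt : ∀ c ∈ V, c.2 < c.1 + m

namespace IsStrip

lemma subset (hV : IsStrip μ κ m V) : V ⊆ SD κ :=
  hV.union_eq ▸ subset_union_left

lemma mem_of_notMem_SD (hV : IsStrip μ κ m V) (hκ : c ∈ SD κ) (hμ : c ∉ SD μ) : c ∈ V := by
  rw [← hV.union_eq, mem_union] at hκ
  exact hκ.resolve_right hμ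

lemma lt_of_row_le (hV : IsStrip μ κ m V) (hμ : μ.row k ≤ t) (hκ : t < κ.row k) : t < m := by
  have := hV.diag_lt _ (hV.mem_of_notMem_SD (mk_mem_SD.2 hκ) (by simpa using hμ))
  omega

lemma row_le_row_add_one (hV : IsStrip μ κ m V) (k : ℕ) : κ.row k ≤ μ.row k + 1 := by
  by_contra! h
  have h₁ := hV.mem_of_notMem_SD (mk_mem_SD.2 (show μ.row k < κ.row k by omega))
    (by simp)
  have h₂ := hV.mem_of_notMem_SD (mk_mem_SD.2 (show μ.row k + 1 < κ.row k by omega))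
    (by simp)
  simpa using hV.eq_of_fst_eq _ h₁ _ h₂ rfl

lemma removableAt_or_addableAt (hV : IsStrip μ κ (m + 1) V)
    (hc : (k + 1, k + 1 + m) ∈ V) : RemovableAt μ k m ∨ AddableAt μ k m := by
  by_cases hμ : m < μ.row k
  · exact .inl (isRemovable_mk_iff.1 (hV.isRemovable _ (mem_inter.2 ⟨hc, mk_mem_SD.2 hμ⟩)))
  have hκ : m < κ.row k := mk_mem_SD.1 (hV.subset hc)
  have hrow : μ.row k = m := by have := hV.row_le_row_add_one k; omega
  refine .inr ⟨hrow, ?_⟩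
  rcases k with _ | j
  · exact .inl rfl
  · -- otherwise the box of `κ` in row `j + 1` on diagonal `m + 1` would lie in `V`
    simp only [Nat.add_sub_cancel]
    refine .inr (not_le.1 fun hj => ?_)
    have := κ.row_lt_row (show j < j + 1 by omega) (by omega)
    simpa using hV.lt_of_row_le hj (by omega)

lemma mk_notMem (hV : IsStrip μ κ m V) (k : ℕ) : (k + 1, k + 1 + m) ∉ V :=
  fun h => by simpa using hV.diag_lt _ h

lemma card_le (hV : IsStrip μ κ m V) : κ.1.sum ≤ V.card + μ.1.sum := by
  rw [← card_SD, ← card_SD, ← hV.union_eq]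
  exact card_union_le _ _

lemma mono (hV : IsStrip μ κ m V) : IsStrip μ κ (m + 1) V :=
  ⟨hV.eq_of_fst_eq, hV.union_eq, hV.isRemovable, fun c hc => by
    have := hV.diag_lt c hc
    omega⟩

lemma of_succ (hV : IsStrip μ κ (m + 1) V) (h : ¬ ∃ c ∈ V, c.2 = c.1 + m) : IsStrip μ κ m V :=
  ⟨hV.eq_of_fst_eq, hV.union_eq, hV.isRemovable, fun c hc => by
    have := hV.diag_lt c hc
    have : c.2 ≠ c.1 + m := fun h' => h ⟨c, hc, h'⟩
    omega⟩

lemma zero_iff : IsStrip μ κ 0 V ↔ V = ∅ ∧ μ = κ := by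
  refine ⟨fun hV => ?_, ?_⟩
  · have hV₀ : V = ∅ := eq_empty_of_forall_notMem fun c hc => by
      have := hV.diag_lt c hc
      have := (mem_SD.1 (hV.subset hc)).2.1
      omega
    exact ⟨hV₀, SD_injective (by simpa [hV₀] using hV.union_eq)⟩
  · rintro ⟨rfl, rfl⟩
    exact ⟨by simp, by simp, by simp, by simp⟩

end IsStrip

open scoped Classical in
def strips (μ κ : StrictPartition) (m : ℕ) : Finset (Finset (ℕ × ℕ)) :=
  (SD κ).powerset.filter (IsStrip μ κ m)

lemma mem_strips : V ∈ strips μ κ m ↔ IsStrip μ κ m V := by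
  classical
  simpa [strips] using fun h : IsStrip μ κ m V => h.subset

open scoped Classical in
lemma strips_zero : strips μ κ 0 = if μ = κ then {∅} else ∅ := by
  ext V
  rw [mem_strips, IsStrip.zero_iff]
  split_ifs with h <;> simp [h]

lemma sum_strips_succ {M : Type*} [AddCommMonoid M] (f : Finset (ℕ × ℕ) → M) :
    ∑ V ∈ strips μ κ (m + 1), f V = ∑ V ∈ strips μ κ m, f V +
      ∑ V ∈ (strips μ κ (m + 1)).filter (fun V => ∃ c ∈ V, c.2 = c.1 + m), f V := by
  classical
  rw [← sum_filter_add_sum_filter_not _ (fun V => ∃ c ∈ V, c.2 = c.1 + m), add_comm]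
  congr 2
  ext V
  rw [mem_filter, mem_strips, mem_strips]
  refine ⟨fun ⟨hV, h⟩ => hV.of_succ h, fun hV => ⟨hV.mono, ?_⟩⟩
  rintro ⟨c, hc, hd⟩
  have := hV.diag_lt c hc
  omega

/-- Under these conditions, deleting the box `(k + 1, k + 1 + m)` matches the strips over `μ`
reaching diagonal `m` with the strips over `ν` below diagonal `m` (`DiagStep.sum_filter_strips`).
They hold for `ν = μ` if that box is removable, and for `ν = μ + □` if it is addable. -/
structure DiagStep (μ ν : StrictPartition) (k m : ℕ) : Prop where
  SD_eq : SD ν = insert (k + 1, k + 1 + m) (SD μ)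
  row_eq : ν.row k = m + 1
  isRemovable_of_mem : (k + 1, k + 1 + m) ∈ SD μ → IsRemovable μ (k + 1, k + 1 + m)
  removableAt_iff : ∀ j ≠ k, ∀ t < m, RemovableAt ν j t ↔ RemovableAt μ j t
  eq_of_diag : ∀ j, RemovableAt μ j m ∨ AddableAt μ j m → j = k

namespace DiagStep

lemma of_removableAt (h : RemovableAt μ k m) : DiagStep μ μ k m where
  SD_eq := (insert_eq_of_mem (by simp [h.1])).symm
  row_eq := h.1
  isRemovable_of_mem _ := isRemovable_mk_iff.2 h
  removableAt_iff _ _ _ _ := Iff.rfl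
  eq_of_diag _ hj := hj.elim (fun hj => hj.unique h) fun hj => (h.not_addableAt hj).elim

lemma of_addableAt (hr : ¬ ∃ j, RemovableAt μ j m) (h : AddableAt μ k m) :
    DiagStep μ (addBox h) k m where
  SD_eq := SD_addBox h
  row_eq := by simp [row_addBox]
  isRemovable_of_mem hc := absurd hc (by simp [h.1])
  removableAt_iff j hj t ht := by
    have := h.1
    unfold RemovableAt
    rw [row_addBox, Function.update_of_ne hj]
    by_cases hjk : j + 1 = k
    · subst hjk
      simp only [Function.update_self]
      omega
    · rw [Function.update_of_ne hjk]
  eq_of_diag j hj := hj.elim (fun hj => (hr ⟨j, hj⟩).elim) fun hj => hj.unique h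

lemma isStrip_of_insert (hs : DiagStep μ ν k m) (hW : (k + 1, k + 1 + m) ∉ W)
    (hV : IsStrip μ κ (m + 1) (insert (k + 1, k + 1 + m) W)) : IsStrip ν κ m W := by
  have hne : ∀ e ∈ W, e.1 ≠ k + 1 := fun e he h =>
    hW (hV.eq_of_fst_eq e (mem_insert_of_mem he) _ (mem_insert_self _ _) h ▸ he)
  have hdiag : ∀ e ∈ W, e.2 < e.1 + m := by
    intro e he
    obtain ⟨j, t, rfl⟩ := exists_eq_mk_of_mem_SD (hV.subset (mem_insert_of_mem he))
    have := hV.diag_lt _ (mem_insert_of_mem he)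
    by_contra! h
    obtain rfl : t = m := by simp only at this h; omega
    exact hne _ he (by rw [hs.eq_of_diag j (hV.removableAt_or_addableAt (mem_insert_of_mem he))])
  refine ⟨fun a ha b hb => hV.eq_of_fst_eq a (mem_insert_of_mem ha) b (mem_insert_of_mem hb),
    by rw [hs.SD_eq, union_insert, ← insert_union, hV.union_eq], fun e he => ?_, hdiag⟩
  obtain ⟨heW, heν⟩ := mem_inter.1 he
  have heμ : e ∈ SD μ :=
    (mem_insert.1 (hs.SD_eq ▸ heν)).resolve_left (ne_of_mem_of_not_mem heW hW)
  obtain ⟨j, t, rfl⟩ := exists_eq_mk_of_mem_SD heμ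
  have ht : t < m := by simpa using hdiag _ heW
  have hj : j ≠ k := fun h => hne _ heW (by simp [h])
  exact isRemovable_mk_iff.2 ((hs.removableAt_iff j hj t ht).2 (isRemovable_mk_iff.1
    (hV.isRemovable _ (mem_inter.2 ⟨mem_insert_of_mem heW, heμ⟩))))

lemma isStrip_insert (hs : DiagStep μ ν k m) (hW : IsStrip ν κ m W) :
    IsStrip μ κ (m + 1) (insert (k + 1, k + 1 + m) W) := by
  have hne : ∀ e ∈ W, e.1 ≠ k + 1 := by
    intro e he h
    obtain ⟨j, t, rfl⟩ := exists_eq_mk_of_mem_SD (hW.subset he)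
    obtain rfl : j = k := by simpa using h
    have ht : t < m := by simpa using hW.diag_lt _ he
    have hν : (j + 1, j + 1 + t) ∈ SD ν := by rw [mk_mem_SD, hs.row_eq]; omega
    have := (isRemovable_mk_iff.1 (hW.isRemovable _ (mem_inter.2 ⟨he, hν⟩))).1
    rw [hs.row_eq] at this
    omega
  refine ⟨?_, by rw [insert_union, ← union_insert, ← hs.SD_eq, hW.union_eq], ?_, ?_⟩
  · intro a ha b hb hab
    rcases mem_insert.1 ha with rfl | ha <;> rcases mem_insert.1 hb with rfl | hb
    · rfl
    · exact absurd hab.symm (hne b hb)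
    · exact absurd hab (hne a ha)
    · exact hW.eq_of_fst_eq a ha b hb hab
  · intro e he
    obtain ⟨he, heμ⟩ := mem_inter.1 he
    rcases mem_insert.1 he with rfl | heW
    · exact hs.isRemovable_of_mem heμ
    obtain ⟨j, t, rfl⟩ := exists_eq_mk_of_mem_SD heμ
    have ht : t < m := by simpa using hW.diag_lt _ heW
    have hj : j ≠ k := fun h => hne _ heW (by simp [h])
    have hν : (j + 1, j + 1 + t) ∈ SD ν := hs.SD_eq ▸ mem_insert_of_mem heμ
    exact isRemovable_mk_iff.2 ((hs.removableAt_iff j hj t ht).1 (isRemovable_mk_iff.1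
      (hW.isRemovable _ (mem_inter.2 ⟨heW, hν⟩))))
  · intro e he
    rcases mem_insert.1 he with rfl | heW
    · simp
    · have := hW.diag_lt e heW
      omega

lemma sum_filter_strips {M : Type*} [AddCommMonoid M] (hs : DiagStep μ ν k m)
    (f : Finset (ℕ × ℕ) → M) :
    ∑ V ∈ (strips μ κ (m + 1)).filter (fun V => ∃ c ∈ V, c.2 = c.1 + m), f V =
      ∑ W ∈ strips ν κ m, f (insert (k + 1, k + 1 + m) W) := by
  have hmem : ∀ V ∈ (strips μ κ (m + 1)).filter (fun V => ∃ c ∈ V, c.2 = c.1 + m),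
      (k + 1, k + 1 + m) ∈ V ∧ IsStrip μ κ (m + 1) V := by
    intro V hV
    obtain ⟨hV, c, hc, hd⟩ := mem_filter.1 hV
    rw [mem_strips] at hV
    obtain ⟨j, t, rfl⟩ := exists_eq_mk_of_mem_SD (hV.subset hc)
    obtain rfl : t = m := by simp only at hd; omega
    obtain rfl := hs.eq_of_diag j (hV.removableAt_or_addableAt hc)
    exact ⟨hc, hV⟩
  refine sum_nbij' (fun V => V.erase (k + 1, k + 1 + m)) (insert (k + 1, k + 1 + m))
    (fun V hV => ?_) (fun W hW => ?_) (fun V hV => insert_erase (hmem V hV).1)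
    (fun W hW => erase_insert ((mem_strips.1 hW).mk_notMem k))
    (fun V hV => by rw [insert_erase (hmem V hV).1])
  · obtain ⟨hc, hV⟩ := hmem V hV
    exact mem_strips.2 (hs.isStrip_of_insert (notMem_erase _ _) (by rwa [insert_erase hc]))
  · exact mem_filter.2 ⟨mem_strips.2 (hs.isStrip_insert (mem_strips.1 hW)),
      _, mem_insert_self _ _, rfl⟩

end DiagStep

theorem coeff_partialChain_single (β x : R) (m : ℕ) (μ κ : StrictPartition) :
    partialChain β x m (Finsupp.single μ 1) κ =
      ∑ V ∈ strips μ κ m, β ^ (V.card + μ.1.sum - κ.1.sum) * x ^ V.card := by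
  classical
  induction m generalizing μ with
  | zero =>
    rw [strips_zero]
    split_ifs with h <;> simp [partialChain, h]
  | succ m ih =>
    rw [partialChain_succ_single, Finsupp.add_apply, Finsupp.smul_apply, smul_eq_mul, ih,
      sum_strips_succ, add_right_inj]
    by_cases hr : ∃ k, RemovableAt μ k m
    · obtain ⟨k, hk⟩ := hr
      rw [aRaw_of_removableAt β hk, ← Finsupp.smul_single_one, map_smul,
        Finsupp.smul_apply, smul_eq_mul, ih, (DiagStep.of_removableAt hk).sum_filter_strips,
        mul_sum, mul_sum]
      refine sum_congr rfl fun W hW => ?_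
      have hW := mem_strips.1 hW
      have := hW.card_le
      rw [card_insert_of_notMem (hW.mk_notMem k),
        show W.card + 1 + μ.1.sum - κ.1.sum = W.card + μ.1.sum - κ.1.sum + 1 by omega]
      ring
    by_cases ha : ∃ k, AddableAt μ k m
    · obtain ⟨k, hk⟩ := ha
      rw [aRaw_of_addableAt β hr hk, ih, (DiagStep.of_addableAt hr hk).sum_filter_strips, mul_sum]
      refine sum_congr rfl fun W hW => ?_
      rw [card_insert_of_notMem ((mem_strips.1 hW).mk_notMem k), sum_addBox, add_assoc,
        add_comm 1]
      ring
    · rw [aRaw_eq_zero β hr ha, map_zero, Finsupp.coe_zero, Pi.zero_apply, mul_zero, eq_comm]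
      refine sum_eq_zero fun V hV => ?_
      obtain ⟨hV, c, hc, hd⟩ := mem_filter.1 hV
      have hV := mem_strips.1 hV
      obtain ⟨j, t, rfl⟩ := exists_eq_mk_of_mem_SD (hV.subset hc)
      obtain rfl : t = m := by simp only at hd; omega
      exact ((hV.removableAt_or_addableAt hc).elim (fun h => hr ⟨j, h⟩) fun h => ha ⟨j, h⟩).elim

end StrictPartition

open scoped Classical in
theorem coeff_Achain_eq_sum_vertical_strips_general {R : Type*} [CommRing R] (β x : R)
    (n : ℕ) (μ lam : StrictPartition)
    (hn : lam.1.headD 0 ≤ n) :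
    (Achain β x n (Finsupp.single μ 1)) lam =
      ∑ V ∈ (SD lam).powerset.filter (fun V =>
          (∀ c ∈ V, ∀ c' ∈ V, c.1 = c'.1 → c = c') ∧
          V ∪ SD μ = SD lam ∧
          ∀ c ∈ V ∩ SD μ, IsRemovable μ c),
        β ^ (V.card + μ.1.sum - lam.1.sum) * x ^ V.card := by
  rw [StrictPartition.Achain_eq_partialChain, StrictPartition.coeff_partialChain_single]
  refine sum_congr (ext fun V => ?_) fun _ _ => rfl
  rw [StrictPartition.mem_strips, mem_filter, mem_powerset]
  refine ⟨fun hV => ⟨hV.subset, hV.1, hV.2, hV.3⟩, fun ⟨hsub, h₁, h₂, h₃⟩ => ⟨h₁, h₂, h₃, ?_⟩⟩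
  -- every box of `SD lam` lies on a diagonal `< lam₁ ≤ n`
  intro c hc
  have hc := StrictPartition.mem_SD.1 (hsub hc)
  have := lam.row_antitone (Nat.zero_le (c.1 - 1))
  rw [StrictPartition.row_zero] at this
  omega

open scoped Classical in
/-- For strict partitions `μ ⊆ λ` and `n ≥ λ₁`, the coefficient
`⟨λ, A₀(x)A₁(x)⋯A_n(x)·μ⟩` equals `Σ_V β^{-|λ/μ|}·(βx)^{|V|}
 = Σ_V β^{|V|-(|λ|-|μ|)}·x^{|V|}`,
summed over the vertical strips `V` (sets of cells with at most one cell per row) with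
`V ∪ SD_μ = SD_λ` and `V ∩ SD_μ ⊆ Rem(μ)` (the removable boxes of `μ`). -/
theorem coeff_Achain_eq_sum_vertical_strips {R : Type*} [CommRing R] (β x : R)
    (n : ℕ) (μ lam : StrictPartition) (hsub : SD μ ⊆ SD lam)
    (hn : lam.1.headD 0 ≤ n) :
    (Achain β x n (Finsupp.single μ 1)) lam =
      ∑ V ∈ (SD lam).powerset.filter (fun V =>
          (∀ c ∈ V, ∀ c' ∈ V, c.1 = c'.1 → c = c') ∧
          V ∪ SD μ = SD lam ∧
          ∀ c ∈ V ∩ SD μ, IsRemovable μ c),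
        β ^ (V.card + μ.1.sum - lam.1.sum) * x ^ V.card :=
  coeff_Achain_eq_sum_vertical_strips_general β x n μ lam hn

end
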